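/- Let φ be analytic on an annulus r < |ζ| < R with r < 1 < R and strictly positive on the unit circle, and let L be the analytic logarithm of φ on an annulus around the unit circle that is real on the unit circle. For z ∈ ℂ with |z| < 1 define L_z(ζ) = L(ζ) + Log(1 − z/ζ) (principal branch), which is analytic on an annulus around the unit circle. Then (L_z)_0 = L_0, and the series ∑_{k=1}^∞ k·[ (L_z)_k·(L_z)_{−k} − L_k·L_{−k} ] converges absolutely with sum equal to −∑_{k=1}^∞ L_k·z^k. -/

import Mathlib

/-- The `k`-th Fourier coefficient of a function on the unit circle:
`h_k = ∫_{|ζ|=1} ζ^{−k} h(ζ) dζ/(2πiζ) = (1/2π)∫_0^{2π} e^{−ikθ} h(e^{iθ}) dθ`. -/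
noncomputable def fourierCoeff' (h : ℂ → ℂ) (k : ℤ) : ℂ :=
  (1 / (2 * Real.pi)) *
    ∫ θ in (0 : ℝ)..(2 * Real.pi),
      Complex.exp (-(Complex.I * k * θ)) * h (Complex.exp (Complex.I * θ))

/-!
On the unit circle `Log(1 - z/ζ) = -∑_{m ≥ 1} (z^m / m) ζ^{-m}`, uniformly since `|z| < 1`, so the
Fourier coefficients of `Log(1 - z/·)` vanish in degrees `k ≥ 0` and equal `-z^k / k` in degree
`-k`. Hence `(L_z)_k = L_k` for `k ≥ 0` and `(L_z)_{-k} = L_{-k} - z^k / k`, and the `k`-th term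
of the series collapses to `-L_k z^k`; absolute convergence follows because the `L_k` are bounded.
-/

open Complex

lemma fourierCoeff'_zpow (n k : ℤ) :
    fourierCoeff' (fun ζ => ζ ^ n) k = if k = n then 1 else 0 := by
  have hexp : ∀ θ : ℝ,
      exp (-(I * k * θ)) * exp (I * θ) ^ n = exp (((n - k : ℤ) : ℂ) * I * θ) := by
    intro θ
    rw [← exp_int_mul, ← exp_add]
    push_cast
    ring_nf
  simp only [fourierCoeff', hexp]
  split_ifs with hkn
  · subst hkn
    simp only [sub_self, Int.cast_zero, zero_mul, exp_zero, intervalIntegral.integral_const,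
      sub_zero, Complex.real_smul, mul_one]
    push_cast
    field_simp
  · have hc : ((n - k : ℤ) : ℂ) * I ≠ 0 :=
      mul_ne_zero (Int.cast_ne_zero.mpr (sub_ne_zero.mpr (Ne.symm hkn))) I_ne_zero
    rw [integral_exp_mul_complex hc]
    have hperiod :
        ((n - k : ℤ) : ℂ) * I * ((2 * Real.pi : ℝ) : ℂ) =
          (n - k : ℤ) * (2 * Real.pi * I) := by
      push_cast
      ring
    rw [hperiod, exp_int_mul_two_pi_mul_I]
    simp

lemma fourierCoeff'_const_mul (c : ℂ) (h : ℂ → ℂ) (k : ℤ) :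
    fourierCoeff' (fun ζ => c * h ζ) k = c * fourierCoeff' h k := by
  simp only [fourierCoeff', mul_left_comm _ c, intervalIntegral.integral_const_mul]

lemma fourierCoeff'_add {f g : ℂ → ℂ} (hf : Continuous fun θ : ℝ => f (exp (I * θ)))
    (hg : Continuous fun θ : ℝ => g (exp (I * θ))) (k : ℤ) :
    fourierCoeff' (fun ζ => f ζ + g ζ) k = fourierCoeff' f k + fourierCoeff' g k := by
  have hchar : Continuous fun θ : ℝ => exp (-(I * k * θ)) := by fun_prop
  simp only [fourierCoeff']
  rw [← mul_add, ← intervalIntegral.integral_add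
    (f := fun θ : ℝ => exp (-(I * k * θ)) * f (exp (I * θ)))
    (g := fun θ : ℝ => exp (-(I * k * θ)) * g (exp (I * θ)))
    ((hchar.mul hf).intervalIntegrable _ _) ((hchar.mul hg).intervalIntegrable _ _)]
  simp only [mul_add]

lemma norm_fourierCoeff'_le {h : ℂ → ℂ} {M : ℝ}
    (hM : ∀ θ ∈ Set.Icc 0 (2 * Real.pi), ‖h (exp (I * θ))‖ ≤ M) (k : ℤ) :
    ‖fourierCoeff' h k‖ ≤ M := by
  have hbound :
      ∀ θ ∈ Set.uIoc 0 (2 * Real.pi), ‖exp (-(I * k * θ)) * h (exp (I * θ))‖ ≤ M := by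
    intro θ hθ
    rw [Set.uIoc_of_le Real.two_pi_pos.le] at hθ
    rw [norm_mul, norm_exp]
    simpa using hM θ ⟨hθ.1.le, hθ.2⟩
  calc ‖fourierCoeff' h k‖
      ≤ (1 / (2 * Real.pi)) * (M * |2 * Real.pi - 0|) := by
        rw [fourierCoeff', norm_mul]
        gcongr
        · simp [abs_of_pos Real.pi_pos]
        · exact intervalIntegral.norm_integral_le_of_norm_le_const hbound
    _ = M := by
        rw [sub_zero, abs_of_pos Real.two_pi_pos]
        field_simp

lemma hasSum_fourierCoeff' {ι : Type*} [Countable ι] {F : ι → ℂ → ℂ} {h : ℂ → ℂ}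
    {bound : ι → ℝ} (hF : ∀ i, Continuous fun θ : ℝ => F i (exp (I * θ)))
    (hFb : ∀ i (θ : ℝ), ‖F i (exp (I * θ))‖ ≤ bound i) (hb : Summable bound)
    (hFh : ∀ θ : ℝ, HasSum (fun i => F i (exp (I * θ))) (h (exp (I * θ)))) (k : ℤ) :
    HasSum (fun i => fourierCoeff' (F i) k) (fourierCoeff' h k) := by
  refine HasSum.mul_left _ (intervalIntegral.hasSum_integral_of_dominated_convergence
    (fun i _ => bound i) (fun i => ?_) (fun i => .of_forall fun θ _ => ?_)
    (.of_forall fun _ _ => hb) intervalIntegrable_const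
    (.of_forall fun θ _ => (hFh θ).mul_left _))
  · exact ((continuous_exp.comp (by fun_prop)).mul (hF i)).aestronglyMeasurable
  · rw [norm_mul, norm_exp]
    simpa using hFb i θ

lemma hasSum_log_one_sub_div {z ζ : ℂ} (h : ‖z‖ < ‖ζ‖) :
    HasSum (fun m : ℕ => -(z ^ (m + 1) / (m + 1)) * ζ ^ (-((m : ℤ) + 1)))
      (log (1 - z / ζ)) := by
  have hζ : ζ ≠ 0 := norm_pos_iff.mp ((norm_nonneg z).trans_lt h)
  have hw : ‖z / ζ‖ < 1 := by
    rw [norm_div, div_lt_one (norm_pos_iff.mpr hζ)]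
    exact h
  have hlog := (hasSum_taylorSeries_neg_log' hw).neg
  rw [neg_neg] at hlog
  suffices hterm : ∀ m : ℕ,
      -(z ^ (m + 1) / (m + 1)) * ζ ^ (-((m : ℤ) + 1)) = -((z / ζ) ^ (m + 1) / (m + 1)) by
    simpa only [hterm] using hlog
  intro m
  rw [div_pow, zpow_neg, show (m : ℤ) + 1 = ((m + 1 : ℕ) : ℤ) by push_cast; rfl, zpow_natCast]
  ring

lemma continuous_log_one_sub_div_exp {z : ℂ} (hz : ‖z‖ < 1) :
    Continuous fun θ : ℝ => log (1 - z / exp (I * θ)) := by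
  have hcirc : Continuous fun θ : ℝ => exp (I * θ) := by fun_prop
  refine continuous_iff_continuousAt.mpr fun θ => (continuousAt_clog ?_).comp
    (continuous_const.sub (continuous_const.div hcirc fun _ => exp_ne_zero _)).continuousAt
  rw [sub_eq_add_neg]
  refine mem_slitPlane_of_norm_lt_one ?_
  rwa [norm_neg, norm_div, norm_exp_I_mul_ofReal, div_one]

lemma hasSum_fourierCoeff'_log_one_sub_div {z : ℂ} (hz : ‖z‖ < 1) (k : ℤ) :
    HasSum (fun m : ℕ => if k = -((m : ℤ) + 1) then -(z ^ (m + 1) / (m + 1)) else 0)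
      (fourierCoeff' (fun ζ => log (1 - z / ζ)) k) := by
  have hnorm : ∀ (m : ℕ) (θ : ℝ),
      ‖-(z ^ (m + 1) / (m + 1)) * exp (I * θ) ^ (-((m : ℤ) + 1))‖ ≤ ‖z‖ ^ (m + 1) := by
    intro m θ
    rw [norm_mul, norm_zpow, norm_exp_I_mul_ofReal, one_zpow, mul_one, norm_neg, norm_div,
      norm_pow]
    refine div_le_self (by positivity) ?_
    rw [← Nat.cast_succ, norm_natCast]
    exact_mod_cast Nat.succ_pos m
  have hcont : ∀ m : ℕ,
      Continuous fun θ : ℝ => -(z ^ (m + 1) / (m + 1)) * exp (I * θ) ^ (-((m : ℤ) + 1)) :=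
    fun m => continuous_const.mul ((continuous_exp.comp (by fun_prop)).zpow₀ _
      fun θ => Or.inl (exp_ne_zero _))
  have hsum := hasSum_fourierCoeff'
    (F := fun (m : ℕ) ζ => -(z ^ (m + 1) / (m + 1)) * ζ ^ (-((m : ℤ) + 1)))
    (h := fun ζ => log (1 - z / ζ)) hcont hnorm
    ((summable_nat_add_iff 1 (f := fun n => ‖z‖ ^ n)).mpr
      (summable_geometric_of_lt_one (norm_nonneg z) hz))
    (fun θ => hasSum_log_one_sub_div (by rwa [norm_exp_I_mul_ofReal])) k
  simpa only [fourierCoeff'_const_mul, fourierCoeff'_zpow, mul_ite, mul_one, mul_zero] using hsum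

lemma fourierCoeff'_log_one_sub_div_of_nonneg {z : ℂ} (hz : ‖z‖ < 1) {k : ℤ}
    (hk : 0 ≤ k) :
    fourierCoeff' (fun ζ => log (1 - z / ζ)) k = 0 := by
  refine (hasSum_fourierCoeff'_log_one_sub_div hz k).unique ?_
  simpa only [show ∀ m : ℕ, k ≠ -((m : ℤ) + 1) by omega, if_false] using hasSum_zero

lemma fourierCoeff'_log_one_sub_div_neg_succ {z : ℂ} (hz : ‖z‖ < 1) (n : ℕ) :
    fourierCoeff' (fun ζ => log (1 - z / ζ)) (-((n : ℤ) + 1)) = -(z ^ (n + 1) / (n + 1)) := by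
  refine (hasSum_fourierCoeff'_log_one_sub_div hz _).unique ?_
  convert hasSum_ite_eq n (-(z ^ (n + 1) / (n + 1))) using 2 with m
  by_cases hmn : m = n
  · simp [hmn]
  · simp only [hmn, if_false]
    exact if_neg (by omega)

theorem log_coefficient_identity_general (L : ℂ → ℂ)
    (r' R' : ℝ) (h2 : r' < 1) (h3 : 1 < R')
    (hL : DifferentiableOn ℂ L {ζ : ℂ | r' < ‖ζ‖ ∧ ‖ζ‖ < R'})
    (z : ℂ) (hz : ‖z‖ < 1) :
    fourierCoeff' (fun ζ => L ζ + Complex.log (1 - z / ζ)) 0 = fourierCoeff' L 0 ∧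
    Summable (fun k : ℕ =>
      ‖((k : ℂ) + 1) *
          (fourierCoeff' (fun ζ => L ζ + Complex.log (1 - z / ζ)) ((k : ℤ) + 1) *
              fourierCoeff' (fun ζ => L ζ + Complex.log (1 - z / ζ)) (-((k : ℤ) + 1)) -
            fourierCoeff' L ((k : ℤ) + 1) * fourierCoeff' L (-((k : ℤ) + 1)))‖) ∧
    (∑' k : ℕ,
        ((k : ℂ) + 1) *
          (fourierCoeff' (fun ζ => L ζ + Complex.log (1 - z / ζ)) ((k : ℤ) + 1) *
              fourierCoeff' (fun ζ => L ζ + Complex.log (1 - z / ζ)) (-((k : ℤ) + 1)) -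
            fourierCoeff' L ((k : ℤ) + 1) * fourierCoeff' L (-((k : ℤ) + 1)))) =
      -∑' k : ℕ, fourierCoeff' L ((k : ℤ) + 1) * z ^ (k + 1) := by
  have hLcont : Continuous fun θ : ℝ => L (exp (I * θ)) :=
    hL.continuousOn.comp_continuous (by fun_prop) fun θ =>
      ⟨(norm_exp_I_mul_ofReal θ).symm ▸ h2, (norm_exp_I_mul_ofReal θ).symm ▸ h3⟩
  have hsplit (k : ℤ) : fourierCoeff' (fun ζ => L ζ + log (1 - z / ζ)) k =
      fourierCoeff' L k + fourierCoeff' (fun ζ => log (1 - z / ζ)) k :=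
    fourierCoeff'_add hLcont (continuous_log_one_sub_div_exp hz) k
  have hterm (k : ℕ) :
      ((k : ℂ) + 1) *
          (fourierCoeff' (fun ζ => L ζ + log (1 - z / ζ)) ((k : ℤ) + 1) *
              fourierCoeff' (fun ζ => L ζ + log (1 - z / ζ)) (-((k : ℤ) + 1)) -
            fourierCoeff' L ((k : ℤ) + 1) * fourierCoeff' L (-((k : ℤ) + 1))) =
        -(fourierCoeff' L ((k : ℤ) + 1) * z ^ (k + 1)) := by
    rw [hsplit, hsplit, fourierCoeff'_log_one_sub_div_of_nonneg hz (by omega),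
      fourierCoeff'_log_one_sub_div_neg_succ hz]
    field_simp
    ring
  obtain ⟨M, hM⟩ := isCompact_Icc.exists_bound_of_continuousOn hLcont.continuousOn
  have hsummable : Summable fun k : ℕ => ‖fourierCoeff' L ((k : ℤ) + 1) * z ^ (k + 1)‖ := by
    refine .of_nonneg_of_le (fun k => norm_nonneg _) (fun k => ?_)
      (((summable_nat_add_iff 1 (f := fun n => ‖z‖ ^ n)).mpr
        (summable_geometric_of_lt_one (norm_nonneg z) hz)).mul_left M)
    rw [norm_mul, norm_pow]
    gcongr
    exact norm_fourierCoeff'_le hM _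
  refine ⟨?_, ?_, ?_⟩
  · rw [hsplit, fourierCoeff'_log_one_sub_div_of_nonneg hz le_rfl, add_zero]
  · simpa only [hterm, norm_neg] using hsummable
  · rw [tsum_congr hterm, tsum_neg]

/-- for `φ` analytic and strictly positive on the unit circle with real
analytic logarithm `L`, and `L_z(ζ) = L(ζ) + Log(1 − z/ζ)` with `|z| < 1`:
`(L_z)_0 = L_0`, and `∑_{k≥1} k·[(L_z)_k(L_z)_{−k} − L_k L_{−k}]` converges absolutely with
sum `−∑_{k≥1} L_k z^k`. -/
theorem log_coefficient_identity (r R : ℝ) (hrR : r < R) (φ L : ℂ → ℂ)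
    (hr : r < 1) (hR : 1 < R)
    (hφ : DifferentiableOn ℂ φ {ζ : ℂ | r < ‖ζ‖ ∧ ‖ζ‖ < R})
    (hφpos : ∀ θ : ℝ, 0 < (φ (Complex.exp (Complex.I * θ))).re ∧
      (φ (Complex.exp (Complex.I * θ))).im = 0)
    (r' R' : ℝ) (h1 : r ≤ r') (h2 : r' < 1) (h3 : 1 < R') (h4 : R' ≤ R)
    (hL : DifferentiableOn ℂ L {ζ : ℂ | r' < ‖ζ‖ ∧ ‖ζ‖ < R'})
    (hLφ : ∀ ζ : ℂ, r' < ‖ζ‖ → ‖ζ‖ < R' → Complex.exp (L ζ) = φ ζ)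
    (hLreal : ∀ θ : ℝ, (L (Complex.exp (Complex.I * θ))).im = 0)
    (z : ℂ) (hz : ‖z‖ < 1) :
    fourierCoeff' (fun ζ => L ζ + Complex.log (1 - z / ζ)) 0 = fourierCoeff' L 0 ∧
    Summable (fun k : ℕ =>
      ‖((k : ℂ) + 1) *
          (fourierCoeff' (fun ζ => L ζ + Complex.log (1 - z / ζ)) ((k : ℤ) + 1) *
              fourierCoeff' (fun ζ => L ζ + Complex.log (1 - z / ζ)) (-((k : ℤ) + 1)) -
            fourierCoeff' L ((k : ℤ) + 1) * fourierCoeff' L (-((k : ℤ) + 1)))‖) ∧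
    (∑' k : ℕ,
        ((k : ℂ) + 1) *
          (fourierCoeff' (fun ζ => L ζ + Complex.log (1 - z / ζ)) ((k : ℤ) + 1) *
              fourierCoeff' (fun ζ => L ζ + Complex.log (1 - z / ζ)) (-((k : ℤ) + 1)) -
            fourierCoeff' L ((k : ℤ) + 1) * fourierCoeff' L (-((k : ℤ) + 1)))) =
      -∑' k : ℕ, fourierCoeff' L ((k : ℤ) + 1) * z ^ (k + 1) :=
  log_coefficient_identity_general L r' R' h2 h3 hL z hz
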